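/- Let f : ℕ → ℂ with |f(n)| ≤ 1 for all n, let k ≥ 1, h_1, …, h_k distinct non-negative integers, z > 1, u ≥ 1 with x ≥ z^u. Then Σ_{n ≤ x} ∏_{i=1}^k f(n+h_i) equals the same sum restricted to those n whose shifts all satisfy (n+h_i)_z ≤ z^u for all i ∈ {1,…,k}, up to an error O_{k,h_1,…,h_k}(x·e^{−u/2} + 1). -/

import Mathlib

/-!
Rankin's trick. With `σ = 1 / (2 log z)`, every `m ≤ M` with `m_z > z ^ u` contributes at least
`e ^ (u / 2)` to `∑_{m ≤ M} (m_z) ^ σ`, and this moment is `O(M)`: writing `n ^ σ = ∑_{d ∣ n} g d`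
with `g` the (nonnegative, multiplicative) Möbius inversion of `n ↦ n ^ σ` and swapping the sums
bounds it by `M ∑_{d z-smooth} g d / d = M ∏_{p ≤ z} (1 + O(σ log p / p))`, which is `O(M)` since
`∑_{p ≤ z} log p / p ≤ 4 log z` (Chebyshev's `θ(y) ≤ y log 4` on dyadic ranges). An `n ≤ x` for which some shift `n + h i`
fails the condition gives a bad `m ≤ x + max h`, and each omitted term has norm at most `1`.
-/

/-- The `z`-smooth part of `m`: the product of the prime powers `p ^ α` exactly
dividing `m` with `p ≤ z`. -/
noncomputable def smoothPart (z : ℝ) (m : ℕ) : ℕ :=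
  ∏ p ∈ m.primeFactors.filter (fun p : ℕ => (p : ℝ) ≤ z), p ^ m.factorization p

open Finset Real

theorem sum_divisors_factorization_prod {R : Type*} [CommSemiring R] (F : ℕ → ℕ → R)
    (hF : ∀ p, F p 0 = 1) {n : ℕ} (hn : n ≠ 0) :
    ∑ d ∈ n.divisors, d.factorization.prod F =
      ∏ p ∈ n.primeFactors, ∑ j ∈ range (n.factorization p + 1), F p j := by
  let G : ArithmeticFunction R := ⟨fun d => if d = 0 then 0 else d.factorization.prod F, by simp⟩
  have hG : ∀ {d}, d ≠ 0 → G d = d.factorization.prod F := fun hd => if_neg hd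
  have hGmul : G.IsMultiplicative := by
    refine ArithmeticFunction.IsMultiplicative.iff_ne_zero.mpr ⟨by simp [hG], fun ha hb hab => ?_⟩
    rw [hG (mul_ne_zero ha hb), hG ha, hG hb, Nat.factorization_mul ha hb,
      Finsupp.prod_add_index_of_disjoint]
    simpa only [Nat.support_factorization] using hab.disjoint_primeFactors
  calc ∑ d ∈ n.divisors, d.factorization.prod F
      = ((ArithmeticFunction.zeta : ArithmeticFunction R) * G) n := by
        rw [ArithmeticFunction.coe_zeta_mul_apply]
        exact sum_congr rfl fun d hd => (hG ((Nat.pos_of_mem_divisors hd).ne')).symm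
    _ = ∏ p ∈ n.primeFactors, ∑ j ∈ range (n.factorization p + 1), F p j := by
        rw [(ArithmeticFunction.isMultiplicative_zeta.natCast.mul
          hGmul).multiplicative_factorization _ hn, Nat.prod_factorization_eq_prod_primeFactors]
        refine prod_congr rfl fun p hp => ?_
        have hp := Nat.prime_of_mem_primeFactors hp
        rw [ArithmeticFunction.coe_zeta_mul_apply, Nat.sum_divisors_prime_pow hp]
        refine sum_congr rfl fun j _ => ?_
        rw [hG (pow_ne_zero _ hp.ne_zero), hp.factorization_pow, Finsupp.prod_single_index (hF p)]

theorem sum_Icc_sum_filter_dvd_le (S : Finset ℕ) {g : ℕ → ℝ} (hg : ∀ d ∈ S, 0 ≤ g d) (M : ℕ) :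
    ∑ m ∈ Icc 1 M, ∑ d ∈ S with d ∣ m, g d ≤ M * ∑ d ∈ S, g d / d := by
  simp_rw [sum_filter]
  rw [sum_comm, mul_sum]
  refine sum_le_sum fun d hd => ?_
  rw [← sum_filter, sum_const, nsmul_eq_mul, show Icc 1 M = Ioc 0 M from rfl,
    Nat.Ioc_filter_dvd_card_eq_div, ← mul_div_assoc, mul_div_right_comm]
  exact mul_le_mul_of_nonneg_right Nat.cast_div_le (hg d hd)

theorem card_filter_lt_mul_rpow_le {ι : Type*} (s : Finset ι) {a : ι → ℝ} (ha : ∀ i ∈ s, 0 ≤ a i)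
    {T σ : ℝ} (hT : 0 ≤ T) (hσ : 0 ≤ σ) :
    #{i ∈ s | T < a i} * T ^ σ ≤ ∑ i ∈ s, a i ^ σ := by
  calc #{i ∈ s | T < a i} * T ^ σ = ∑ i ∈ s with T < a i, T ^ σ := by
        rw [sum_const, nsmul_eq_mul]
    _ ≤ ∑ i ∈ s with T < a i, a i ^ σ :=
        sum_le_sum fun i hi => rpow_le_rpow hT (mem_filter.mp hi).2.le hσ
    _ ≤ ∑ i ∈ s, a i ^ σ :=
        sum_le_sum_of_subset_of_nonneg (filter_subset _ _)
          fun i hi _ => rpow_nonneg (ha i hi) σ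

theorem card_filter_exists_shift_le {ι : Type*} [Fintype ι] (P : ℕ → Prop) [DecidablePred P]
    (h : ι → ℕ) {H : ℕ} (hH : ∀ i, h i ≤ H) (N : ℕ) :
    #{n ∈ Icc 1 N | ∃ i, P (n + h i)} ≤ Fintype.card ι * #{m ∈ Icc 1 (N + H) | P m} := by
  classical
  calc #{n ∈ Icc 1 N | ∃ i, P (n + h i)}
      ≤ #(univ.biUnion fun i => {n ∈ Icc 1 N | P (n + h i)}) := by
        refine card_le_card fun n hn => ?_
        obtain ⟨hn, i, hi⟩ := mem_filter.mp hn
        exact mem_biUnion.mpr ⟨i, mem_univ i, mem_filter.mpr ⟨hn, hi⟩⟩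
    _ ≤ ∑ i, #{n ∈ Icc 1 N | P (n + h i)} := card_biUnion_le
    _ ≤ ∑ _i : ι, #{m ∈ Icc 1 (N + H) | P m} := by
        refine sum_le_sum fun i _ => card_le_card_of_injOn (· + h i) (fun n hn => ?_)
          fun a _ b _ hab => Nat.add_right_cancel hab
        simp only [coe_filter, mem_Icc, Set.mem_ofPred_eq] at hn ⊢
        exact ⟨⟨by omega, by have := hH i; omega⟩, hn.2⟩
    _ = Fintype.card ι * #{m ∈ Icc 1 (N + H) | P m} := by rw [sum_const, card_univ, smul_eq_mul]

theorem norm_sum_sub_sum_filter_le_card {ι E : Type*} [SeminormedAddCommGroup E] (s : Finset ι)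
    (p : ι → Prop) [DecidablePred p] {F : ι → E} (hF : ∀ i ∈ s, ‖F i‖ ≤ 1) :
    ‖∑ i ∈ s, F i - ∑ i ∈ s with p i, F i‖ ≤ #{i ∈ s | ¬ p i} := by
  rw [← sum_filter_add_sum_filter_not s p, add_sub_cancel_left]
  calc ‖∑ i ∈ s with ¬ p i, F i‖ ≤ ∑ i ∈ s with ¬ p i, (1 : ℝ) :=
        norm_sum_le_of_le _ fun i hi => hF i (mem_filter.mp hi).1
    _ = #{i ∈ s | ¬ p i} := by rw [sum_const, nsmul_one]

theorem sum_primesLE_sdiff_log_div_le (n : ℕ) :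
    ∑ p ∈ n.primesLE \ (n / 2).primesLE, log p / p ≤ 4 * log 2 := by
  rcases n.eq_zero_or_pos with rfl | hn
  · simpa using log_nonneg one_le_two
  have hn' : (0 : ℝ) < n := by exact_mod_cast hn
  have hwindow : ∀ p ∈ n.primesLE \ (n / 2).primesLE, log p / p ≤ 2 / n * log p := by
    intro p hp
    simp only [mem_sdiff, Nat.mem_primesLE, not_and] at hp
    have hlt : (n : ℝ) < 2 * p := by
      exact_mod_cast (show n < 2 * p by have := mt hp.2 (not_not.mpr hp.1.2); omega)
    have hlog : 0 ≤ log p := log_nonneg (by exact_mod_cast hp.1.2.one_le)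
    have hp2 : (1 : ℝ) ≤ 2 / n * p := by rw [div_mul_eq_mul_div, le_div_iff₀ hn']; linarith
    rw [div_le_iff₀ (by linarith)]
    nlinarith
  calc ∑ p ∈ n.primesLE \ (n / 2).primesLE, log p / p
      ≤ ∑ p ∈ n.primesLE, 2 / n * log p :=
        (sum_le_sum hwindow).trans <| sum_le_sum_of_subset_of_nonneg sdiff_subset
          fun p hp _ => mul_nonneg (by positivity)
            (log_nonneg (by exact_mod_cast (Nat.prime_of_mem_primesLE hp).one_le))
    _ = 2 / n * Chebyshev.theta n := by rw [Chebyshev.theta_eq_sum_primesLE_log, mul_sum]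
    _ ≤ 2 / n * (log 4 * n) := by gcongr; exact Chebyshev.theta_le_log4_mul_x hn'.le
    _ = 4 * log 2 := by
        rw [show (4 : ℝ) = 2 ^ 2 by norm_num, log_pow]; field_simp; ring

theorem sum_primesLE_log_div_le (n : ℕ) : ∑ p ∈ n.primesLE, log p / p ≤ 4 * log n := by
  induction n using Nat.strong_induction_on with
  | _ n ih =>
  rcases lt_or_ge n 2 with hn | hn
  · interval_cases n <;> simp
  have hsub : (n / 2).primesLE ⊆ n.primesLE := fun p hp =>
    Nat.mem_primesLE.mpr ⟨(Nat.le_of_mem_primesLE hp).trans (Nat.div_le_self n 2),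
      Nat.prime_of_mem_primesLE hp⟩
  have hhalf : log (n / 2 : ℕ) ≤ log n - log 2 := by
    rw [← log_div (by positivity) two_ne_zero]
    exact log_le_log (by exact_mod_cast Nat.div_pos hn two_pos) Nat.cast_div_le
  rw [← sum_sdiff hsub]
  linarith [sum_primesLE_sdiff_log_div_le n, ih (n / 2) (by omega)]

theorem exp_half_le : exp (1 / 2) ≤ 5 / 3 := by
  have h : exp (1 / 2) ^ 2 = exp 1 := by rw [← exp_nat_mul]; norm_num
  nlinarith [exp_one_lt_d9, exp_pos (1 / 2)]

theorem exp_sub_one_le_two_mul {t : ℝ} (ht : 0 ≤ t) (ht' : t ≤ 1 / 2) : exp t - 1 ≤ 2 * t := by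
  have h1 : 1 - t ≤ exp (-t) := by linarith [add_one_le_exp (-t)]
  have h2 : exp t * exp (-t) = 1 := by rw [← exp_add]; simp
  have h3 : exp t ≤ 5 / 3 := (exp_le_exp.mpr ht').trans exp_half_le
  nlinarith [exp_pos t]

noncomputable def rankinFactor (σ : ℝ) (p : ℕ) : ℕ → ℝ
  | 0 => 1
  | j + 1 => ((p : ℝ) ^ σ) ^ (j + 1) - ((p : ℝ) ^ σ) ^ j

/-- The Möbius inversion `∑_{e ∣ d} μ (d / e) e ^ σ` of `n ↦ n ^ σ`, written through its values
`p ^ (σ j) - p ^ (σ (j - 1))` at prime powers `p ^ j`. -/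
noncomputable def rankinWeight (σ : ℝ) (d : ℕ) : ℝ :=
  d.factorization.prod (rankinFactor σ)

theorem sum_range_rankinFactor (σ : ℝ) (p K : ℕ) :
    ∑ j ∈ range (K + 1), rankinFactor σ p j = ((p : ℝ) ^ σ) ^ K := by
  induction K with
  | zero => simp [rankinFactor]
  | succ K ih => rw [sum_range_succ, ih, rankinFactor]; ring

theorem rankinFactor_nonneg {σ : ℝ} (hσ : 0 ≤ σ) {p : ℕ} (hp : p ≠ 0) :
    ∀ j, 0 ≤ rankinFactor σ p j
  | 0 => zero_le_one
  | j + 1 => sub_nonneg.mpr <| pow_le_pow_right₀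
      (one_le_rpow (Nat.one_le_cast.mpr (Nat.one_le_iff_ne_zero.mpr hp)) hσ) j.le_succ

theorem rankinWeight_nonneg {σ : ℝ} (hσ : 0 ≤ σ) (d : ℕ) : 0 ≤ rankinWeight σ d := by
  rw [rankinWeight, Nat.prod_factorization_eq_prod_primeFactors]
  exact prod_nonneg fun p hp => rankinFactor_nonneg hσ (Nat.prime_of_mem_primeFactors hp).ne_zero _

theorem sum_divisors_rankinWeight (σ : ℝ) {n : ℕ} (hn : n ≠ 0) :
    ∑ d ∈ n.divisors, rankinWeight σ d = (n : ℝ) ^ σ := by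
  simp only [rankinWeight]
  rw [sum_divisors_factorization_prod _ (fun _ => rfl) hn]
  conv_rhs => rw [← Nat.prod_factorization_pow_eq_self hn]
  rw [Nat.prod_factorization_eq_prod_primeFactors, Nat.cast_prod,
    ← finsetProd_rpow _ _ (fun _ _ => by positivity)]
  refine prod_congr rfl fun p _ => ?_
  rw [sum_range_rankinFactor, Nat.cast_pow, rpow_pow_comm (Nat.cast_nonneg p)]

theorem rankinWeight_div_self (σ : ℝ) {d : ℕ} (hd : d ≠ 0) :
    rankinWeight σ d / d = d.factorization.prod fun p j => rankinFactor σ p j / (p : ℝ) ^ j := by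
  have hd' : (d : ℝ) = d.factorization.prod fun p j => (p : ℝ) ^ j := by
    exact_mod_cast (Nat.prod_factorization_pow_eq_self hd).symm
  rw [hd', rankinWeight, Finsupp.prod, Finsupp.prod, Finsupp.prod, prod_div_distrib]

theorem sum_range_rankinFactor_div_pow_le {σ : ℝ} (hσ : 0 ≤ σ) {p : ℕ} (hp : p ≠ 0)
    (hσp : (p : ℝ) ^ σ < p) (K : ℕ) :
    ∑ j ∈ range (K + 1), rankinFactor σ p j / (p : ℝ) ^ j
      ≤ 1 + ((p : ℝ) ^ σ - 1) / (p - (p : ℝ) ^ σ) := by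
  set q := (p : ℝ) ^ σ
  have hp0 : (0 : ℝ) < p := by positivity
  have hq1 : 1 ≤ q := one_le_rpow (Nat.one_le_cast.mpr (Nat.one_le_iff_ne_zero.mpr hp)) hσ
  have hterm : ∀ j : ℕ,
      rankinFactor σ p (j + 1) / (p : ℝ) ^ (j + 1) = (q - 1) / p * (q / p) ^ j := by
    intro j
    rw [rankinFactor, div_pow]
    field_simp
    ring
  have hgeom : ∑ j ∈ range K, (q / p) ^ j ≤ p / (p - q) := by
    calc ∑ j ∈ range K, (q / p) ^ j ≤ (q / p) ^ 0 / (1 - q / p) := by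
          rw [range_eq_Ico]
          exact geom_sum_Ico_le_of_lt_one (by positivity) ((div_lt_one hp0).mpr hσp)
      _ = p / (p - q) := by field_simp
  have hq1p : 0 ≤ (q - 1) / p := div_nonneg (by linarith) hp0.le
  rw [sum_range_succ', sum_congr rfl fun j _ => hterm j, ← mul_sum]
  calc (q - 1) / p * ∑ j ∈ range K, (q / p) ^ j + rankinFactor σ p 0 / (p : ℝ) ^ 0
      ≤ (q - 1) / p * (p / (p - q)) + 1 := by
        rw [rankinFactor, pow_zero, div_one]
        gcongr
    _ = 1 + (q - 1) / (p - q) := by field_simp; ring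

theorem sum_range_rankinFactor_div_pow_le_exp {σ : ℝ} (hσ : 0 ≤ σ) {p : ℕ} (hp : p.Prime)
    (hσp : σ * log p ≤ 1 / 2) (K : ℕ) :
    ∑ j ∈ range (K + 1), rankinFactor σ p j / (p : ℝ) ^ j ≤ exp (12 * σ * log p / p) := by
  have hp2 : (2 : ℝ) ≤ p := by exact_mod_cast hp.two_le
  have hq : (p : ℝ) ^ σ = exp (σ * log p) := by
    rw [rpow_def_of_pos (by positivity), mul_comm]
  have hq53 : (p : ℝ) ^ σ ≤ 5 / 3 := hq ▸ (exp_le_exp.mpr hσp).trans exp_half_le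
  have hq1 : (p : ℝ) ^ σ - 1 ≤ 2 * (σ * log p) :=
    hq ▸ exp_sub_one_le_two_mul (mul_nonneg hσ (log_nonneg (by linarith))) hσp
  calc ∑ j ∈ range (K + 1), rankinFactor σ p j / (p : ℝ) ^ j
      ≤ 1 + ((p : ℝ) ^ σ - 1) / (p - (p : ℝ) ^ σ) :=
        sum_range_rankinFactor_div_pow_le hσ hp.ne_zero (by linarith) K
    _ ≤ 1 + 12 * σ * log p / p := by
        -- `p ^ σ ≤ 5 / 3 ≤ 5 p / 6`
        gcongr 1 + ?_
        rw [div_le_div_iff₀ (by linarith) (by linarith)]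
        nlinarith [one_le_rpow (x := (p : ℝ)) (by linarith) hσ]
    _ ≤ exp (12 * σ * log p / p) := by linarith [add_one_le_exp (12 * σ * log p / p)]

theorem sum_divisors_rankinWeight_div_le {z : ℝ} (hz : 1 < z) {N : ℕ} (hN : N ≠ 0)
    (hNz : N.primeFactors ⊆ ⌊z⌋₊.primesLE) :
    ∑ d ∈ N.divisors, rankinWeight (2 * log z)⁻¹ d / d ≤ exp 24 := by
  set σ := (2 * log z)⁻¹
  have hlogz : 0 < log z := log_pos hz
  have hσ : 0 ≤ σ := by positivity
  have hσz : σ * log z = 1 / 2 := by simp only [σ]; field_simp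
  have hfloor : (0 : ℝ) < ⌊z⌋₊ := by exact_mod_cast Nat.floor_pos.mpr hz.le
  have hfloor_le : (⌊z⌋₊ : ℝ) ≤ z := Nat.floor_le (by linarith)
  have hlocal : ∀ p ∈ N.primeFactors, ∑ j ∈ range (N.factorization p + 1),
      rankinFactor σ p j / (p : ℝ) ^ j ≤ exp (12 * σ * log p / p) := by
    intro p hp
    have hpz : (p : ℝ) ≤ z :=
      (Nat.cast_le.mpr (Nat.le_of_mem_primesLE (hNz hp))).trans hfloor_le
    refine sum_range_rankinFactor_div_pow_le_exp hσ (Nat.prime_of_mem_primeFactors hp) ?_ _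
    calc σ * log p ≤ σ * log z := by
          gcongr
          exact_mod_cast (Nat.prime_of_mem_primeFactors hp).pos
      _ = 1 / 2 := hσz
  calc ∑ d ∈ N.divisors, rankinWeight σ d / d
      = ∑ d ∈ N.divisors, d.factorization.prod fun p j => rankinFactor σ p j / (p : ℝ) ^ j :=
        sum_congr rfl fun d hd => rankinWeight_div_self σ ((Nat.pos_of_mem_divisors hd).ne')
    _ = ∏ p ∈ N.primeFactors, ∑ j ∈ range (N.factorization p + 1),
          rankinFactor σ p j / (p : ℝ) ^ j :=
        sum_divisors_factorization_prod _ (fun p => by simp [rankinFactor]) hN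
    _ ≤ ∏ p ∈ N.primeFactors, exp (12 * σ * log p / p) :=
        prod_le_prod (fun p hp => sum_nonneg fun j _ => div_nonneg
          (rankinFactor_nonneg hσ (Nat.prime_of_mem_primeFactors hp).ne_zero j) (by positivity))
          hlocal
    _ = exp (12 * σ * ∑ p ∈ N.primeFactors, log p / p) := by
        rw [← exp_sum, mul_sum]; simp only [mul_div_assoc]
    _ ≤ exp (12 * σ * (4 * log z)) := by
        gcongr
        calc ∑ p ∈ N.primeFactors, log p / p ≤ ∑ p ∈ ⌊z⌋₊.primesLE, log p / p :=
              sum_le_sum_of_subset_of_nonneg hNz fun p _ _ => by positivity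
          _ ≤ 4 * log ⌊z⌋₊ := sum_primesLE_log_div_le _
          _ ≤ 4 * log z := by gcongr
    _ = exp 24 := by congr 1; linear_combination 48 * hσz

theorem smoothPart_ne_zero (z : ℝ) (m : ℕ) : smoothPart z m ≠ 0 :=
  prod_ne_zero_iff.mpr fun _ hp =>
    pow_ne_zero _ (Nat.prime_of_mem_primeFactors (mem_filter.mp hp).1).ne_zero

theorem smoothPart_dvd (z : ℝ) (m : ℕ) : smoothPart z m ∣ m := by
  rcases eq_or_ne m 0 with rfl | hm
  · exact dvd_zero _
  calc smoothPart z m ∣ ∏ p ∈ m.primeFactors, p ^ m.factorization p :=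
        prod_dvd_prod_of_subset _ _ _ (filter_subset _ _)
    _ = m := Nat.prod_factorization_pow_eq_self hm

theorem smoothPart_dvd_primorial_pow (z : ℝ) (m : ℕ) : smoothPart z m ∣ primorial ⌊z⌋₊ ^ m := by
  rw [primorial_eq_prod_primesLE, ← prod_pow]
  refine (prod_dvd_prod_of_dvd _ _ fun p hp => pow_dvd_pow p ?_).trans
    (prod_dvd_prod_of_subset _ _ _ fun p hp => ?_)
  · exact (Nat.factorization_lt p (Nat.mem_primeFactors.mp (mem_filter.mp hp).1).2.2).le
  · obtain ⟨hp, hpz⟩ := mem_filter.mp hp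
    exact Nat.mem_primesLE.mpr ⟨Nat.le_floor hpz, Nat.prime_of_mem_primeFactors hp⟩

theorem sum_rpow_smoothPart_le {z : ℝ} (hz : 1 < z) (M : ℕ) :
    ∑ m ∈ Icc 1 M, (smoothPart z m : ℝ) ^ (2 * log z)⁻¹ ≤ exp 24 * M := by
  rcases M.eq_zero_or_pos with rfl | hM
  · simp
  set σ := (2 * log z)⁻¹
  have hσ : 0 ≤ σ := by have := log_pos hz; positivity
  set N := primorial ⌊z⌋₊ ^ M
  have hN : N ≠ 0 := pow_ne_zero _ (primorial_ne_zero _)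
  calc ∑ m ∈ Icc 1 M, (smoothPart z m : ℝ) ^ σ
      = ∑ m ∈ Icc 1 M, ∑ d ∈ (smoothPart z m).divisors, rankinWeight σ d :=
        sum_congr rfl fun m _ => (sum_divisors_rankinWeight σ (smoothPart_ne_zero z m)).symm
    _ ≤ ∑ m ∈ Icc 1 M, ∑ d ∈ N.divisors with d ∣ m, rankinWeight σ d := by
        refine sum_le_sum fun m hm => sum_le_sum_of_subset_of_nonneg (fun d hd => ?_)
          fun d _ _ => rankinWeight_nonneg hσ d
        have hd := Nat.dvd_of_mem_divisors hd
        have hdN : d ∣ N :=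
          hd.trans <| (smoothPart_dvd_primorial_pow z m).trans (pow_dvd_pow _ (mem_Icc.mp hm).2)
        exact mem_filter.mpr ⟨Nat.mem_divisors.mpr ⟨hdN, hN⟩, hd.trans (smoothPart_dvd z m)⟩
    _ ≤ M * ∑ d ∈ N.divisors, rankinWeight σ d / d :=
        sum_Icc_sum_filter_dvd_le _ (fun d _ => rankinWeight_nonneg hσ d) M
    _ ≤ M * exp 24 := by
        gcongr
        refine sum_divisors_rankinWeight_div_le hz hN ?_
        rw [Nat.primeFactors_pow _ hM.ne', primeFactors_primorial]
    _ = exp 24 * M := mul_comm _ _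

theorem card_filter_lt_smoothPart_le {z : ℝ} (hz : 1 < z) (u : ℝ) (M : ℕ) :
    #{m ∈ Icc 1 M | z ^ u < smoothPart z m} ≤ exp 24 * M * exp (-u / 2) := by
  have hlogz := log_pos hz
  have hthreshold : (z ^ u) ^ (2 * log z)⁻¹ = exp (u / 2) := by
    rw [← rpow_mul (by linarith), rpow_def_of_pos (by linarith)]
    congr 1
    field_simp
  have h := (card_filter_lt_mul_rpow_le (Icc 1 M) (a := fun m => (smoothPart z m : ℝ))
    (fun _ _ => Nat.cast_nonneg _) (rpow_nonneg (by linarith : (0 : ℝ) ≤ z) u)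
    (by positivity)).trans (sum_rpow_smoothPart_le hz M)
  rw [hthreshold] at h
  calc (#{m ∈ Icc 1 M | z ^ u < smoothPart z m} : ℝ)
      = #{m ∈ Icc 1 M | z ^ u < smoothPart z m} * exp (u / 2) * exp (-u / 2) := by
        rw [mul_assoc, ← exp_add, neg_div, add_neg_cancel, exp_zero, mul_one]
    _ ≤ exp 24 * M * exp (-u / 2) := by gcongr

theorem stmt_15_general (k : ℕ) (h : Fin k → ℕ) :
    ∃ C : ℝ, 0 < C ∧ ∀ (f : ℕ → ℂ)
      (_hf : ∀ n, ‖f n‖ ≤ 1)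
      (u x z : ℝ) (_hu : 1 ≤ u) (_hz : 1 < z) (_hx : z ^ u ≤ x),
      ‖∑ n ∈ Finset.Icc 1 ⌊x⌋₊, ∏ i, f (n + h i)
          - ∑ n ∈ (Finset.Icc 1 ⌊x⌋₊).filter
              (fun n : ℕ => ∀ i, (smoothPart z (n + h i) : ℝ) ≤ z ^ u),
            ∏ i, f (n + h i)‖ ≤
        C * (x * Real.exp (-u / 2) + 1) := by
  set H := univ.sup h
  refine ⟨(k + 1) * (H + 1) * exp 24, by positivity, fun f hf u x z hu hz hx => ?_⟩
  have hx0 : 0 ≤ x := (rpow_nonneg (by linarith) u).trans hx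
  have hexp : exp (-u / 2) ≤ 1 := exp_le_one_iff.mpr (by linarith)
  calc _ ≤ (#{n ∈ Icc 1 ⌊x⌋₊ | ¬ ∀ i, (smoothPart z (n + h i) : ℝ) ≤ z ^ u} : ℝ) :=
        norm_sum_sub_sum_filter_le_card _ _ fun n _ =>
          (norm_prod _ _).trans_le (prod_le_one (fun _ _ => norm_nonneg _) fun _ _ => hf _)
    _ ≤ k * #{m ∈ Icc 1 (⌊x⌋₊ + H) | z ^ u < smoothPart z m} := by
        simp only [not_forall, not_le]
        norm_cast
        -- the two filters differ only in their decidability instances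
        convert card_filter_exists_shift_le (fun m => z ^ u < smoothPart z m) h
          (fun i => le_sup (mem_univ i)) ⌊x⌋₊
        exact (Fintype.card_fin k).symm
    _ ≤ k * (exp 24 * (⌊x⌋₊ + H : ℕ) * exp (-u / 2)) := by
        gcongr
        exact card_filter_lt_smoothPart_le hz u _
    _ = k * exp 24 * ((⌊x⌋₊ + H) * exp (-u / 2)) := by push_cast; ring
    _ ≤ (k + 1) * exp 24 * ((H + 1) * (x * exp (-u / 2) + 1)) := by
        gcongr ?_ * _ * ?_
        · linarith
        have he := (exp_pos (-u / 2)).le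
        linarith [mul_le_mul_of_nonneg_right (Nat.floor_le hx0) he,
          mul_le_of_le_one_right (Nat.cast_nonneg H) hexp,
          mul_nonneg (Nat.cast_nonneg H : (0 : ℝ) ≤ H) (mul_nonneg hx0 he)]
    _ = (k + 1) * (H + 1) * exp 24 * (x * exp (-u / 2) + 1) := by ring

theorem stmt_15 (k : ℕ) (hk : 1 ≤ k) (h : Fin k → ℕ) (hinj : Function.Injective h) :
    ∃ C : ℝ, 0 < C ∧ ∀ (f : ℕ → ℂ)
      (_hf : ∀ n, ‖f n‖ ≤ 1)
      (u x z : ℝ) (_hu : 1 ≤ u) (_hz : 1 < z) (_hx : z ^ u ≤ x),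
      ‖∑ n ∈ Finset.Icc 1 ⌊x⌋₊, ∏ i, f (n + h i)
          - ∑ n ∈ (Finset.Icc 1 ⌊x⌋₊).filter
              (fun n : ℕ => ∀ i, (smoothPart z (n + h i) : ℝ) ≤ z ^ u),
            ∏ i, f (n + h i)‖ ≤
        C * (x * Real.exp (-u / 2) + 1) :=
  stmt_15_general k h
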